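/- Let L be a thin Lie algebra whose second diamond is L_k with k > 5 (i.e. dim L_i = 1 for 2 ≤ i < k and dim L_k = 2). Then there exists a nonzero element y of L_1 with [L y y] = 0. -/

import Mathlib

/-!
Pick `v` spanning `L₂`; since `dim L₁ = 2 > 1 = dim L₃`, some `y ≠ 0` in `L₁` has `⁅v, y⁆ = 0`,
so `y` centralises `L₂`. In characteristic 2, `(ad y)²` is a derivation, so its kernel is a
subalgebra; it contains `L₁`, hence all of `L`.

In odd characteristic complete `y` to a basis `x, y` of `L₁` and put `v₂ = ⁅x, y⁆`,
`vᵢ₊₁ = ⁅vᵢ, x⁆`. The element `c = ⁅v₂, v₃⁆ ∈ L₅` satisfies `⁅v₄, y⁆ = -c`, `⁅v₅, y⁆ = -2⁅c, x⁆`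
and `⁅c, y⁆ = 0`; as `dim L₅ = 1` and `L₆ ≠ 0`, this forces `c = 0`. One then shows by induction
on the degree that `⁅⁅u, y⁆, y⁆ = 0` and `⁅⁅u, y⁆, v₂⁆ = 0` for homogeneous `u`. By the covering
property it suffices to check one generator per degree, and the second identity is settled by
whether `y` centralises the two preceding components: if not, it centralises the present one;
if so, these components are spanned by `a, ⁅a, x⁆, ⁅⁅a, x⁆, x⁆, …`, and expanding `⁅a, vᵢ⁆` along
this chain and using `⁅v₃, y⁆ = ⁅v₄, y⁆ = ⁅v₅, y⁆ = 0` gives the required relations (dividing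
by 2 once). Throughout, `Lₙ₊₁ = ⁅Lₙ, L₁⁆` because `L₁` generates, so a vanishing component kills
all later ones.
-/

open Module

/-- A thin Lie algebra structure: a grading of `L` over the positive integers
(`C 0 = ⊥`), internal direct sum, compatible with the bracket, with `L₁`
two-dimensional and generating `L`, `L` infinite-dimensional, and satisfying
the covering property: for every nonzero homogeneous `z ∈ Lᵢ`,
`span [z, L₁] = L_{i+1}`. -/
structure IsThinGraded (F : Type*) (L : Type*) [Field F] [LieRing L] [LieAlgebra F L]
    (C : ℕ → Submodule F L) : Prop where
  zero_bot : C 0 = ⊥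
  internal : DirectSum.IsInternal C
  bracket_mem : ∀ i j : ℕ, ∀ u ∈ C i, ∀ v ∈ C j, ⁅u, v⁆ ∈ C (i + j)
  dim_one : Module.finrank F (C 1) = 2
  generates : LieSubalgebra.lieSpan F L ((C 1 : Submodule F L) : Set L) = ⊤
  infinite_dim : ¬ Module.Finite F L
  covering : ∀ i : ℕ, ∀ z ∈ C i, z ≠ 0 →
    Submodule.span F {w : L | ∃ a ∈ C 1, w = ⁅z, a⁆} = C (i + 1)

section LieIdentities

variable {R L : Type*} [CommRing R] [LieRing L] [LieAlgebra R L]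

lemma lie_lie_comm (t a b : L) : ⁅⁅t, a⁆, b⁆ = ⁅⁅t, b⁆, a⁆ + ⁅t, ⁅a, b⁆⁆ := by
  rw [lie_lie, ← lie_skew ⁅t, b⁆ a]
  abel

lemma lie_lie_eq_sub (t a b : L) : ⁅t, ⁅a, b⁆⁆ = ⁅⁅t, a⁆, b⁆ - ⁅⁅t, b⁆, a⁆ := by
  rw [lie_lie_comm t a b]
  abel

lemma lie_lie_eq_zero {t s y : L} (ht : ⁅t, y⁆ = 0) (hs : ⁅s, y⁆ = 0) : ⁅⁅t, s⁆, y⁆ = 0 := by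
  rw [lie_lie_comm, ht, hs, zero_lie, lie_zero, add_zero]

lemma lie_lie_eq_zero_of_two_eq_zero (h2 : (2 : R) = 0) {S : Set L}
    (hS : LieSubalgebra.lieSpan R L S = ⊤) {y : L} (hSy : ∀ a ∈ S, ⁅⁅a, y⁆, y⁆ = 0) (z : L) : ⁅⁅z, y⁆, y⁆ = 0 := by
  have hz : z ∈ LieSubalgebra.lieSpan R L S := hS ▸ LieSubalgebra.mem_top z
  induction hz using LieSubalgebra.lieSpan_induction with
  | mem a ha => exact hSy a ha
  | zero => rw [zero_lie, zero_lie]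
  | add a b _ _ ha hb => rw [add_lie, add_lie, ha, hb, add_zero]
  | smul t a _ ha => rw [smul_lie, smul_lie, ha, smul_zero]
  | lie a b _ _ ha hb =>
    -- `(ad y)²` is a derivation up to the cross term `2 ⁅⁅a, y⁆, ⁅b, y⁆⁆`
    rw [lie_lie_comm a b y, add_lie, lie_lie_comm ⁅a, y⁆ b y, lie_lie_comm a ⁅b, y⁆ y, ha, hb,
      zero_lie, lie_zero, zero_add, add_zero, ← two_smul R, h2, zero_smul]

end LieIdentities

section LeftNormedSpan

variable {R L : Type*} [CommRing R] [LieRing L] [LieAlgebra R L]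

lemma lie_mem_iSup {ι : Type*} {p : ι → Submodule R L}
    (hp : ∀ i j, ∀ u ∈ p i, ∀ w ∈ p j, ⁅u, w⁆ ∈ ⨆ k, p k) {u w : L}
    (hu : u ∈ ⨆ i, p i) (hw : w ∈ ⨆ j, p j) : ⁅u, w⁆ ∈ ⨆ k, p k := by
  let bracket : L →ₗ[R] L →ₗ[R] L := LieModule.toEnd R L L
  suffices Submodule.map₂ bracket (⨆ i, p i) (⨆ j, p j) ≤ ⨆ k, p k from
    this (Submodule.apply_mem_map₂ bracket hu hw)
  simp only [Submodule.map₂_iSup_left, Submodule.map₂_iSup_right]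
  exact iSup₂_le fun j i => Submodule.map₂_le.mpr (hp i j)

def leftNormedSpan (V : Submodule R L) : ℕ → Submodule R L
  | 0 => V
  | n + 1 =>
    Submodule.map₂ (LieModule.toEnd R L L : L →ₗ[R] Module.End R L) (leftNormedSpan V n) V

lemma lie_mem_leftNormedSpan {V : Submodule R L} {m n : ℕ} {u w : L}
    (hu : u ∈ leftNormedSpan V m) (hw : w ∈ leftNormedSpan V n) :
    ⁅u, w⁆ ∈ leftNormedSpan V (m + n + 1) := by
  induction n generalizing m u w with
  | zero => exact Submodule.apply_mem_map₂ _ hu hw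
  | succ n ih =>
    suffices Submodule.map₂ (LieModule.toEnd R L L : L →ₗ[R] Module.End R L)
        (leftNormedSpan V n) V ≤
          (leftNormedSpan V (m + (n + 1) + 1)).comap (LieModule.toEnd R L L u) from this hw
    refine Submodule.map₂_le.mpr fun z hz a ha => ?_
    have hza : ⁅⁅u, a⁆, z⁆ ∈ leftNormedSpan V (m + (n + 1) + 1) := by
      rw [show m + (n + 1) + 1 = m + 1 + n + 1 by omega]
      exact ih (Submodule.apply_mem_map₂ _ hu ha) hz
    change ⁅u, ⁅z, a⁆⁆ ∈ leftNormedSpan V (m + (n + 1) + 1)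
    rw [lie_lie_eq_sub]
    exact sub_mem (Submodule.apply_mem_map₂ _ (ih hu hz) ha) hza

lemma iSup_leftNormedSpan_eq_top {V : Submodule R L}
    (hV : LieSubalgebra.lieSpan R L (V : Set L) = ⊤) : ⨆ n, leftNormedSpan V n = ⊤ := by
  let K : LieSubalgebra R L :=
    { (⨆ n, leftNormedSpan V n : Submodule R L) with
      lie_mem' := lie_mem_iSup fun _ _ _ hu _ hw =>
        Submodule.mem_iSup_of_mem _ (lie_mem_leftNormedSpan hu hw) }
  have hK : LieSubalgebra.lieSpan R L (V : Set L) ≤ K :=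
    LieSubalgebra.lieSpan_le.mpr fun u hu => Submodule.mem_iSup_of_mem 0 hu
  rw [hV, top_le_iff] at hK
  exact congrArg LieSubalgebra.toSubmodule hK

end LeftNormedSpan

section CentralizingChain

variable {F L : Type*} [Field F] [LieRing L] [LieAlgebra F L] {x y a : L} {l ν : F}

lemma lie_chain_eq_smul (ha : ⁅a, y⁆ = 0) (hax : ⁅⁅a, x⁆, y⁆ = 0)
    (hl : ⁅⁅⁅a, x⁆, x⁆, ⁅x, y⁆⁆ = l • ⁅⁅⁅⁅a, x⁆, x⁆, y⁆, x⁆) :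
    ⁅⁅a, x⁆, ⁅⁅x, y⁆, x⁆⁆ = (1 - l) • ⁅⁅⁅⁅a, x⁆, x⁆, y⁆, x⁆ ∧
      ⁅a, ⁅⁅⁅x, y⁆, x⁆, x⁆⁆ = (l - 2) • ⁅⁅⁅⁅a, x⁆, x⁆, y⁆, x⁆ := by
  have hbv2 : ⁅⁅a, x⁆, ⁅x, y⁆⁆ = ⁅⁅⁅a, x⁆, x⁆, y⁆ := by
    rw [lie_lie_eq_sub, hax, zero_lie, sub_zero]
  have hav2 : ⁅a, ⁅x, y⁆⁆ = 0 := by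
    rw [lie_lie_eq_sub, hax, ha, zero_lie, sub_zero]
  have hbv3 : ⁅⁅a, x⁆, ⁅⁅x, y⁆, x⁆⁆ = (1 - l) • ⁅⁅⁅⁅a, x⁆, x⁆, y⁆, x⁆ := by
    rw [lie_lie_eq_sub, hbv2, hl, sub_smul, one_smul]
  refine ⟨hbv3, ?_⟩
  rw [lie_lie_eq_sub, lie_lie_eq_sub a, hav2, zero_lie, hbv2, hbv3, zero_sub, neg_lie]
  module

lemma lie_eq_zero_of_centralizing_chain (hv3 : ⁅⁅⁅x, y⁆, x⁆, y⁆ = 0)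
    (hv4 : ⁅⁅⁅⁅x, y⁆, x⁆, x⁆, y⁆ = 0) (ha : ⁅a, y⁆ = 0) (hax : ⁅⁅a, x⁆, y⁆ = 0)
    (hr : ⁅⁅⁅⁅a, x⁆, x⁆, y⁆, y⁆ = 0)
    (hl : ⁅⁅⁅a, x⁆, x⁆, ⁅x, y⁆⁆ = l • ⁅⁅⁅⁅a, x⁆, x⁆, y⁆, x⁆) :
    ⁅⁅⁅⁅⁅a, x⁆, x⁆, y⁆, x⁆, y⁆ = 0 ∧ ⁅⁅⁅⁅a, x⁆, x⁆, y⁆, ⁅x, y⁆⁆ = 0 := by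
  obtain ⟨hbv3, hav4⟩ := lie_chain_eq_smul ha hax hl
  have h3 := lie_lie_eq_zero hax hv3
  have h4 := lie_lie_eq_zero ha hv4
  rw [hbv3, smul_lie] at h3
  rw [hav4, smul_lie] at h4
  have hρ : ⁅⁅⁅⁅⁅a, x⁆, x⁆, y⁆, x⁆, y⁆ = 0 := by
    linear_combination (norm := module) -h3 - h4
  exact ⟨hρ, by rw [lie_lie_eq_sub, hρ, hr, zero_lie, sub_zero]⟩

lemma lie_lie_eq_zero_of_centralizing_chain (h2 : (2 : F) ≠ 0)
    (hv4 : ⁅⁅⁅⁅x, y⁆, x⁆, x⁆, y⁆ = 0)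
    (hv5 : ⁅⁅⁅⁅⁅x, y⁆, x⁆, x⁆, x⁆, y⁆ = 0) (ha : ⁅a, y⁆ = 0) (hax : ⁅⁅a, x⁆, y⁆ = 0)
    (hρ : ⁅⁅⁅⁅⁅a, x⁆, x⁆, y⁆, x⁆, y⁆ = 0)
    (hl : ⁅⁅⁅a, x⁆, x⁆, ⁅x, y⁆⁆ = l • ⁅⁅⁅⁅a, x⁆, x⁆, y⁆, x⁆)
    (hν : ⁅⁅⁅⁅a, x⁆, x⁆, x⁆, x⁆ = ν • ⁅⁅⁅⁅a, x⁆, x⁆, y⁆, x⁆) :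
    ⁅⁅⁅⁅⁅a, x⁆, x⁆, x⁆, y⁆, ⁅x, y⁆⁆ = 0 := by
  obtain ⟨hbv3, hav4⟩ := lie_chain_eq_smul ha hax hl
  set c := ⁅⁅a, x⁆, x⁆
  set rx := ⁅⁅c, y⁆, x⁆
  have hwy : ⁅⁅c, x⁆, y⁆ = (1 + l) • rx := by
    rw [lie_lie_comm c x y, hl]
    module
  have hcv3 : ⁅c, ⁅⁅x, y⁆, x⁆⁆ = (1 + 2 * l) • ⁅rx, x⁆ := by
    rw [lie_lie_eq_sub, hl, smul_lie, lie_lie_eq_sub, hν, smul_lie, hρ, hwy, smul_lie]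
    module
  have hbv4 : ⁅⁅a, x⁆, ⁅⁅⁅x, y⁆, x⁆, x⁆⁆ = (-3 * l) • ⁅rx, x⁆ := by
    rw [lie_lie_eq_sub, hbv3, smul_lie, hcv3]
    module
  have hav5 : ⁅a, ⁅⁅⁅⁅x, y⁆, x⁆, x⁆, x⁆⁆ = (4 * l - 2) • ⁅rx, x⁆ := by
    rw [lie_lie_eq_sub, hav4, smul_lie, hbv4]
    module
  have h4 := lie_lie_eq_zero hax hv4
  have h5 := lie_lie_eq_zero ha hv5
  rw [hbv4, smul_lie] at h4
  rw [hav5, smul_lie] at h5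
  have hRv2 : ⁅rx, ⁅x, y⁆⁆ = ⁅⁅rx, x⁆, y⁆ := by
    rw [lie_lie_eq_sub, hρ, zero_lie, sub_zero]
  rw [hwy, smul_lie, hRv2]
  have h : (2 : F) • (1 + l) • ⁅⁅rx, x⁆, y⁆ = 0 := by
    linear_combination (norm := module) -(2 : F) • h4 - h5
  exact (smul_eq_zero.mp h).resolve_left h2

end CentralizingChain

section FiniteDimensional

variable {F L : Type*} [Field F] [LieRing L] [LieAlgebra F L]

lemma lie_eq_zero_of_finrank_eq_one {V : Submodule F L} (hV : finrank F V = 1) {u w : L}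
    (hu : u ∈ V) (hw : w ∈ V) : ⁅u, w⁆ = 0 := by
  obtain ⟨v, -, hv⟩ := finrank_eq_one_iff'.mp hV
  obtain ⟨a, ha⟩ := hv ⟨u, hu⟩
  obtain ⟨b, hb⟩ := hv ⟨w, hw⟩
  simp only [Subtype.ext_iff, Submodule.coe_smul] at ha hb
  rw [← ha, ← hb, smul_lie, lie_smul, lie_self, smul_zero, smul_zero]

lemma exists_span_pair_eq {V : Submodule F L} (hV : finrank F V = 2) {y : L} (hy : y ∈ V)
    (hy0 : y ≠ 0) : ∃ x ∈ V, Submodule.span F {x, y} = V := by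
  have : FiniteDimensional F V := Module.finite_of_finrank_pos (by omega)
  obtain ⟨x, hx, hxy⟩ : ∃ x ∈ V, x ∉ Submodule.span F {y} := by
    by_contra! h
    have := Submodule.finrank_mono h
    rw [finrank_span_singleton hy0] at this
    omega
  have hle : Submodule.span F {x, y} ≤ V := by
    rw [Submodule.span_le]
    rintro _ (rfl | rfl) <;> assumption
  have := Submodule.finiteDimensional_of_le hle
  have hlt : Submodule.span F {y} < Submodule.span F {x, y} := by
    refine lt_of_le_of_ne (Submodule.span_mono (by simp)) fun h => hxy ?_
    exact h ▸ Submodule.subset_span (by simp)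
  have := Submodule.finrank_lt_finrank_of_lt hlt
  rw [finrank_span_singleton hy0] at this
  exact ⟨x, hx, Submodule.eq_of_le_of_finrank_le hle (by omega)⟩

end FiniteDimensional

namespace IsThinGraded

variable {F L : Type*} [Field F] [LieRing L] [LieAlgebra F L] {C : ℕ → Submodule F L}

lemma leftNormedSpan_le (hthin : IsThinGraded F L C) (n : ℕ) :
    leftNormedSpan (C 1) n ≤ C (n + 1) := by
  induction n with
  | zero => exact le_rfl
  | succ n ih =>
    exact Submodule.map₂_le.mpr fun z hz a ha => hthin.bracket_mem (n + 1) 1 z (ih hz) a ha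

lemma leftNormedSpan_eq (hthin : IsThinGraded F L C) (n : ℕ) :
    leftNormedSpan (C 1) n = C (n + 1) := by
  refine le_antisymm (hthin.leftNormedSpan_le n) fun u hu => ?_
  have hle : ⨆ m, leftNormedSpan (C 1) m ≤
      leftNormedSpan (C 1) n ⊔ ⨆ (j) (_ : j ≠ n + 1), C j := by
    refine iSup_le fun m => ?_
    rcases eq_or_ne m n with rfl | hm
    · exact le_sup_left
    · exact le_sup_of_le_right
        (le_iSup₂_of_le (m + 1) (by omega) (hthin.leftNormedSpan_le m))
  have hmem : u ∈ (leftNormedSpan (C 1) n ⊔ ⨆ (j) (_ : j ≠ n + 1), C j) ⊓ C (n + 1) :=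
    ⟨hle (iSup_leftNormedSpan_eq_top hthin.generates ▸ Submodule.mem_top), hu⟩
  rwa [sup_inf_assoc_of_le _ (hthin.leftNormedSpan_le n),
    (hthin.internal.submodule_iSupIndep (n + 1)).symm.eq_bot, sup_bot_eq] at hmem

lemma succ_eq_bot (hthin : IsThinGraded F L C) {n : ℕ} (h : C (n + 1) = ⊥) :
    C (n + 2) = ⊥ := by
  rw [← hthin.leftNormedSpan_eq (n + 1), leftNormedSpan, hthin.leftNormedSpan_eq, h,
    Submodule.map₂_bot_left]

variable {x y : L}

lemma exists_eq_smul_add_smul (hthin : IsThinGraded F L C)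
    (hxy : C 1 ≤ Submodule.span F {x, y}) {i : ℕ} {z u : L} (hz : z ∈ C i) (hz0 : z ≠ 0)
    (hu : u ∈ C (i + 1)) : ∃ α β : F, α • ⁅z, x⁆ + β • ⁅z, y⁆ = u := by
  rw [← hthin.covering i z hz hz0] at hu
  refine Submodule.mem_span_pair.mp (Submodule.span_le.mpr ?_ hu)
  rintro _ ⟨a, ha, rfl⟩
  obtain ⟨α, β, rfl⟩ := Submodule.mem_span_pair.mp (hxy ha)
  rw [lie_add, lie_smul, lie_smul]
  exact Submodule.mem_span_pair.mpr ⟨α, β, rfl⟩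

lemma exists_smul_eq_of_lie_eq_zero (hthin : IsThinGraded F L C)
    (hxy : C 1 ≤ Submodule.span F {x, y}) {i : ℕ} {z u : L} (hz : z ∈ C i) (hz0 : z ≠ 0)
    (hzy : ⁅z, y⁆ = 0) (hu : u ∈ C (i + 1)) : ∃ α : F, α • ⁅z, x⁆ = u := by
  obtain ⟨α, β, rfl⟩ := hthin.exists_eq_smul_add_smul hxy hz hz0 hu
  exact ⟨α, by rw [hzy, smul_zero, add_zero]⟩

lemma lie_eq_zero_of_mem_succ (hthin : IsThinGraded F L C)
    (hxy : C 1 ≤ Submodule.span F {x, y}) {i : ℕ} {z u : L} (hz : z ∈ C i) (hz0 : z ≠ 0)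
    (hzy : ⁅z, y⁆ = 0) (hzxy : ⁅⁅z, x⁆, y⁆ = 0) (hu : u ∈ C (i + 1)) : ⁅u, y⁆ = 0 := by
  obtain ⟨α, rfl⟩ := hthin.exists_smul_eq_of_lie_eq_zero hxy hz hz0 hzy hu
  rw [smul_lie, hzxy, smul_zero]

lemma lie_eq_zero_of_mem_add_two (hthin : IsThinGraded F L C)
    (hxy : C 1 ≤ Submodule.span F {x, y}) (hy : y ∈ C 1) {i : ℕ} {t u : L} (ht : t ∈ C i)
    (hty : ⁅t, y⁆ ≠ 0) (htyy : ⁅⁅t, y⁆, y⁆ = 0) (htyv : ⁅⁅t, y⁆, ⁅x, y⁆⁆ = 0)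
    (hu : u ∈ C (i + 2)) : ⁅u, y⁆ = 0 :=
  hthin.lie_eq_zero_of_mem_succ hxy (hthin.bracket_mem i 1 t ht y hy) hty htyy
    (by rw [lie_lie_comm, htyy, zero_lie, zero_add, htyv]) hu

lemma lie_lie_eq_zero_of_mem_succ (hthin : IsThinGraded F L C)
    (hxy : C 1 ≤ Submodule.span F {x, y}) (hv2 : ⁅⁅x, y⁆, y⁆ = 0) {i : ℕ} {z u : L}
    (hz : z ∈ C i) (hz0 : z ≠ 0) (hzyy : ⁅⁅z, y⁆, y⁆ = 0) (hzyv : ⁅⁅z, y⁆, ⁅x, y⁆⁆ = 0)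
    (hu : u ∈ C (i + 1)) : ⁅⁅u, y⁆, y⁆ = 0 := by
  have h1 : ⁅⁅⁅z, y⁆, x⁆, y⁆ = 0 := by rw [lie_lie_comm, hzyy, zero_lie, zero_add, hzyv]
  have h2 : ⁅⁅z, ⁅x, y⁆⁆, y⁆ = 0 := by rw [lie_lie_comm, hzyv, hv2, lie_zero, add_zero]
  have hzxyy : ⁅⁅⁅z, x⁆, y⁆, y⁆ = 0 := by rw [lie_lie_comm z x y, add_lie, h1, h2, add_zero]
  obtain ⟨α, β, rfl⟩ := hthin.exists_eq_smul_add_smul hxy hz hz0 hu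
  simp only [add_lie, smul_lie, hzxyy, hzyy, smul_zero, add_zero]

lemma lie_eq_zero_of_centralizing (hthin : IsThinGraded F L C)
    (hxy : C 1 ≤ Submodule.span F {x, y}) (hx : x ∈ C 1) (hy : y ∈ C 1)
    (hv3 : ⁅⁅⁅x, y⁆, x⁆, y⁆ = 0) (hv4 : ⁅⁅⁅⁅x, y⁆, x⁆, x⁆, y⁆ = 0) {i : ℕ} {a : L}
    (ha_mem : a ∈ C i) (ha : ⁅a, y⁆ = 0) (hax : ⁅⁅a, x⁆, y⁆ = 0)
    (hr : ⁅⁅⁅⁅a, x⁆, x⁆, y⁆, y⁆ = 0) :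
    ⁅⁅⁅⁅⁅a, x⁆, x⁆, y⁆, x⁆, y⁆ = 0 ∧ ⁅⁅⁅⁅a, x⁆, x⁆, y⁆, ⁅x, y⁆⁆ = 0 := by
  have hc : ⁅⁅a, x⁆, x⁆ ∈ C (i + 2) :=
    hthin.bracket_mem _ 1 _ (hthin.bracket_mem i 1 a ha_mem x hx) x hx
  rcases eq_or_ne ⁅⁅⁅a, x⁆, x⁆, y⁆ 0 with hr0 | hr0
  · simp only [hr0, zero_lie, and_self]
  obtain ⟨l, hl⟩ := hthin.exists_smul_eq_of_lie_eq_zero hxy (hthin.bracket_mem _ 1 _ hc y hy)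
    hr0 hr (hthin.bracket_mem _ 2 _ hc _ (hthin.bracket_mem 1 1 x hx y hy))
  exact lie_eq_zero_of_centralizing_chain hv3 hv4 ha hax hr hl.symm

lemma lie_lie_eq_zero_of_centralizing (hthin : IsThinGraded F L C)
    (hxy : C 1 ≤ Submodule.span F {x, y}) (hx : x ∈ C 1) (hy : y ∈ C 1) (h2 : (2 : F) ≠ 0)
    (hv3 : ⁅⁅⁅x, y⁆, x⁆, y⁆ = 0) (hv4 : ⁅⁅⁅⁅x, y⁆, x⁆, x⁆, y⁆ = 0)
    (hv5 : ⁅⁅⁅⁅⁅x, y⁆, x⁆, x⁆, x⁆, y⁆ = 0) {i : ℕ} {a : L}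
    (ha_mem : a ∈ C i) (ha : ⁅a, y⁆ = 0) (hax : ⁅⁅a, x⁆, y⁆ = 0)
    (hr : ⁅⁅⁅⁅a, x⁆, x⁆, y⁆, y⁆ = 0) (hr0 : ⁅⁅⁅a, x⁆, x⁆, y⁆ ≠ 0) :
    ⁅⁅⁅⁅⁅a, x⁆, x⁆, x⁆, y⁆, ⁅x, y⁆⁆ = 0 := by
  have hc : ⁅⁅a, x⁆, x⁆ ∈ C (i + 2) :=
    hthin.bracket_mem _ 1 _ (hthin.bracket_mem i 1 a ha_mem x hx) x hx
  have hrC : ⁅⁅⁅a, x⁆, x⁆, y⁆ ∈ C (i + 3) := hthin.bracket_mem _ 1 _ hc y hy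
  obtain ⟨l, hl⟩ := hthin.exists_smul_eq_of_lie_eq_zero hxy hrC hr0 hr
    (hthin.bracket_mem _ 2 _ hc _ (hthin.bracket_mem 1 1 x hx y hy))
  obtain ⟨ν, hν⟩ := hthin.exists_smul_eq_of_lie_eq_zero hxy hrC hr0 hr
    (hthin.bracket_mem _ 1 _ (hthin.bracket_mem _ 1 _ hc x hx) x hx)
  have hρ := (lie_eq_zero_of_centralizing_chain hv3 hv4 ha hax hr hl.symm).1
  exact lie_lie_eq_zero_of_centralizing_chain h2 hv4 hv5 ha hax hρ hl.symm hν.symm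

lemma lie_lie_eq_zero_of_mem_add_four (hthin : IsThinGraded F L C)
    (hxy : C 1 ≤ Submodule.span F {x, y}) (hx : x ∈ C 1) (hy : y ∈ C 1) (h2 : (2 : F) ≠ 0)
    (hv3 : ⁅⁅⁅x, y⁆, x⁆, y⁆ = 0) (hv4 : ⁅⁅⁅⁅x, y⁆, x⁆, x⁆, y⁆ = 0)
    (hv5 : ⁅⁅⁅⁅⁅x, y⁆, x⁆, x⁆, x⁆, y⁆ = 0) {i : ℕ} {z u : L} (hz : z ∈ C (i + 3)) (hz0 : z ≠ 0)
    (hA : ∀ n ≤ i + 4, ∀ u ∈ C n, ⁅⁅u, y⁆, y⁆ = 0)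
    (hB : ∀ n ≤ i + 2, ∀ u ∈ C n, ⁅⁅u, y⁆, ⁅x, y⁆⁆ = 0) (hu : u ∈ C (i + 4)) :
    ⁅⁅u, y⁆, ⁅x, y⁆⁆ = 0 := by
  obtain ⟨α, β, rfl⟩ := hthin.exists_eq_smul_add_smul hxy hz hz0 hu
  suffices h : ⁅⁅⁅z, x⁆, y⁆, ⁅x, y⁆⁆ = 0 by
    simp only [add_lie, smul_lie, h, hA _ (by omega) z hz, smul_zero, add_zero]
  have hC2 : C (i + 2) ≠ ⊥ := fun h =>
    (Submodule.ne_bot_iff _).mpr ⟨z, hz, hz0⟩ (hthin.succ_eq_bot h)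
  by_cases hD2 : ∀ t ∈ C (i + 2), ⁅t, y⁆ = 0
  swap
  · push Not at hD2
    obtain ⟨t, ht, hty⟩ := hD2
    rw [hthin.lie_eq_zero_of_mem_add_two hxy hy ht hty (hA _ (by omega) t ht)
      (hB _ le_rfl t ht) (hthin.bracket_mem _ 1 z hz x hx), zero_lie]
  obtain ⟨a, ha_mem, ha0⟩ := (Submodule.ne_bot_iff _).mp hC2
  obtain ⟨γ, rfl⟩ := hthin.exists_smul_eq_of_lie_eq_zero hxy ha_mem ha0 (hD2 a ha_mem) hz
  have hb : ⁅a, x⁆ ∈ C (i + 3) := hthin.bracket_mem _ 1 a ha_mem x hx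
  have hc : ⁅⁅a, x⁆, x⁆ ∈ C (i + 4) := hthin.bracket_mem _ 1 _ hb x hx
  simp only [smul_lie]
  by_cases hax : ⁅⁅a, x⁆, y⁆ = 0
  · rw [(hthin.lie_eq_zero_of_centralizing hxy hx hy hv3 hv4 ha_mem (hD2 a ha_mem) hax
      (hA _ le_rfl _ hc)).2, smul_zero]
  have hD1 : ∀ t ∈ C (i + 1), ⁅t, y⁆ = 0 := fun t ht => by
    by_contra hty
    exact hax (hthin.lie_eq_zero_of_mem_add_two hxy hy ht hty (hA _ (by omega) t ht)
      (hB _ (by omega) t ht) hb)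
  obtain ⟨a', ha'_mem, ha'0⟩ :=
    (Submodule.ne_bot_iff _).mp fun h => hC2 (hthin.succ_eq_bot h)
  obtain ⟨δ, rfl⟩ := hthin.exists_smul_eq_of_lie_eq_zero hxy ha'_mem ha'0 (hD1 a' ha'_mem) ha_mem
  have hb' : ⁅a', x⁆ ∈ C (i + 2) := hthin.bracket_mem _ 1 a' ha'_mem x hx
  have hr0 : ⁅⁅⁅a', x⁆, x⁆, y⁆ ≠ 0 := fun h => hax (by rw [smul_lie, smul_lie, h, smul_zero])
  rw [smul_lie, smul_lie, smul_lie, smul_lie,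
    hthin.lie_lie_eq_zero_of_centralizing hxy hx hy h2 hv3 hv4 hv5 ha'_mem (hD1 a' ha'_mem)
      (hD2 _ hb') (hA _ (by omega) _ (hthin.bracket_mem _ 1 _ hb' x hx)) hr0,
    smul_zero, smul_zero]

theorem forall_lie_lie_eq_zero (hthin : IsThinGraded F L C)
    (hxy : C 1 ≤ Submodule.span F {x, y}) (hx : x ∈ C 1) (hy : y ∈ C 1) (h2 : (2 : F) ≠ 0)
    (hD2 : ∀ u ∈ C 2, ⁅u, y⁆ = 0) (hD3 : ∀ u ∈ C 3, ⁅u, y⁆ = 0)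
    (hv4 : ⁅⁅⁅⁅x, y⁆, x⁆, x⁆, y⁆ = 0) (hv5 : ⁅⁅⁅⁅⁅x, y⁆, x⁆, x⁆, x⁆, y⁆ = 0) (n : ℕ) :
    ∀ u ∈ C n, ⁅⁅u, y⁆, y⁆ = 0 ∧ ⁅⁅u, y⁆, ⁅x, y⁆⁆ = 0 := by
  have hv2 := hD2 _ (hthin.bracket_mem 1 1 x hx y hy)
  have hv3 := hD3 _ (hthin.bracket_mem 2 1 _ (hthin.bracket_mem 1 1 x hx y hy) x hx)
  induction n using Nat.strong_induction_on with
  | _ n ih =>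
  match n with
  | 0 =>
    intro u hu
    rw [hthin.zero_bot, Submodule.mem_bot] at hu
    simp only [hu, zero_lie, and_self]
  | 1 =>
    intro u hu
    obtain ⟨α, β, rfl⟩ := Submodule.mem_span_pair.mp (hxy hu)
    simp only [add_lie, smul_lie, lie_self, hv2, smul_zero, add_zero, and_self]
  | 2 => exact fun u hu => by simp only [hD2 u hu, zero_lie, and_self]
  | 3 => exact fun u hu => by simp only [hD3 u hu, zero_lie, and_self]
  | i + 4 =>
    rcases eq_or_ne (C (i + 3)) ⊥ with hbot | hne
    · intro u hu
      rw [hthin.succ_eq_bot hbot, Submodule.mem_bot] at hu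
      simp only [hu, zero_lie, and_self]
    obtain ⟨z, hz, hz0⟩ := (Submodule.ne_bot_iff _).mp hne
    have hA : ∀ n ≤ i + 4, ∀ u ∈ C n, ⁅⁅u, y⁆, y⁆ = 0 := by
      intro n hn u hu
      rcases hn.lt_or_eq with hn | rfl
      · exact (ih n hn u hu).1
      · exact hthin.lie_lie_eq_zero_of_mem_succ hxy hv2 hz hz0 (ih _ (by omega) z hz).1
          (ih _ (by omega) z hz).2 hu
    exact fun u hu => ⟨hA _ le_rfl u hu, hthin.lie_lie_eq_zero_of_mem_add_four hxy hx hy h2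
      hv3 hv4 hv5 hz hz0 hA (fun n hn u hu => (ih n (by omega) u hu).2) hu⟩

lemma lie_eq_zero_of_finrank_five (hthin : IsThinGraded F L C)
    (hxy : C 1 ≤ Submodule.span F {x, y}) (hx : x ∈ C 1) (hy : y ∈ C 1) (h2 : (2 : F) ≠ 0)
    (hv2 : ⁅⁅x, y⁆, y⁆ = 0) (hv3 : ⁅⁅⁅x, y⁆, x⁆, y⁆ = 0) (hC5 : finrank F (C 5) = 1)
    (hC6 : C 6 ≠ ⊥) :
    ⁅⁅⁅⁅x, y⁆, x⁆, x⁆, y⁆ = 0 ∧ ⁅⁅⁅⁅⁅x, y⁆, x⁆, x⁆, x⁆, y⁆ = 0 := by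
  have hv2C : ⁅x, y⁆ ∈ C 2 := hthin.bracket_mem 1 1 x hx y hy
  have hv3C : ⁅⁅x, y⁆, x⁆ ∈ C 3 := hthin.bracket_mem 2 1 _ hv2C x hx
  have hv5C : ⁅⁅⁅⁅x, y⁆, x⁆, x⁆, x⁆ ∈ C 5 :=
    hthin.bracket_mem 4 1 _ (hthin.bracket_mem 3 1 _ hv3C x hx) x hx
  have hcC : ⁅⁅x, y⁆, ⁅⁅x, y⁆, x⁆⁆ ∈ C 5 := hthin.bracket_mem 2 3 _ hv2C _ hv3C
  have hv4y : ⁅⁅⁅⁅x, y⁆, x⁆, x⁆, y⁆ = -⁅⁅x, y⁆, ⁅⁅x, y⁆, x⁆⁆ := by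
    rw [lie_lie_comm, hv3, zero_lie, zero_add, ← lie_skew]
  have hv5y : ⁅⁅⁅⁅⁅x, y⁆, x⁆, x⁆, x⁆, y⁆ = -(2 : F) • ⁅⁅⁅x, y⁆, ⁅⁅x, y⁆, x⁆⁆, x⁆ := by
    rw [lie_lie_comm _ x y, hv4y, lie_lie_comm _ x ⁅x, y⁆, ← lie_skew ⁅⁅x, y⁆, x⁆ ⁅x, y⁆,
      ← lie_skew x ⁅x, y⁆, lie_neg, lie_self, neg_zero, add_zero, neg_lie]
    module
  have hcy : ⁅⁅⁅x, y⁆, ⁅⁅x, y⁆, x⁆⁆, y⁆ = 0 := lie_lie_eq_zero hv2 hv3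
  set c := ⁅⁅x, y⁆, ⁅⁅x, y⁆, x⁆⁆
  suffices hc : c = 0 by
    rw [hv4y, hv5y, hc, zero_lie, smul_zero, neg_zero]
    exact ⟨rfl, rfl⟩
  by_contra hc0
  -- `v₅ ∈ C 5 = F ∙ c` and `y` kills `c`, so `2 ⁅c, x⁆ = -⁅v₅, y⁆ = 0` and `C 6` vanishes
  obtain ⟨δ, hδ⟩ := (finrank_eq_one_iff_of_nonzero' (⟨c, hcC⟩ : C 5)
    (by simpa using hc0)).mp hC5 ⟨_, hv5C⟩
  simp only [Subtype.ext_iff, Submodule.coe_smul] at hδ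
  have hcx : (2 : F) • ⁅c, x⁆ = 0 := by
    rw [← neg_eq_zero, ← neg_smul, ← hv5y, ← hδ, smul_lie, hcy, smul_zero]
  refine hC6 ((Submodule.eq_bot_iff _).mpr fun u hu => ?_)
  obtain ⟨α, β, rfl⟩ := hthin.exists_eq_smul_add_smul hxy hcC hc0 hu
  rw [(smul_eq_zero.mp hcx).resolve_left h2, hcy, smul_zero, smul_zero, add_zero]

lemma exists_lie_eq_zero (hthin : IsThinGraded F L C) (hC2 : finrank F (C 2) = 1)
    (hC3 : finrank F (C 3) = 1) : ∃ y ∈ C 1, y ≠ 0 ∧ ∀ u ∈ C 2, ⁅u, y⁆ = 0 := by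
  obtain ⟨⟨v, hv⟩, -, hspan⟩ := finrank_eq_one_iff'.mp hC2
  have : FiniteDimensional F (C 1) := Module.finite_of_finrank_pos (by rw [hthin.dim_one]; omega)
  have : FiniteDimensional F (C 3) := Module.finite_of_finrank_pos (by rw [hC3]; omega)
  let ad_v : C 1 →ₗ[F] C 3 :=
    ((LieModule.toEnd F L L v : L →ₗ[F] L).domRestrict (C 1)).codRestrict (C 3)
      fun u => hthin.bracket_mem 2 1 v hv u u.2
  obtain ⟨⟨y, hy⟩, hyk, hy0⟩ := (Submodule.ne_bot_iff _).mp
    (LinearMap.ker_ne_bot_of_finrank_lt (f := ad_v) (by rw [hthin.dim_one, hC3]; omega))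
  refine ⟨y, hy, fun h => hy0 (Subtype.ext h), fun u hu => ?_⟩
  obtain ⟨a, ha⟩ := hspan ⟨u, hu⟩
  simp only [Subtype.ext_iff, Submodule.coe_smul] at ha
  have hvy : ⁅v, y⁆ = 0 := congrArg Subtype.val (LinearMap.mem_ker.mp hyk)
  rw [← ha, smul_lie, hvy, smul_zero]

theorem lie_lie_eq_zero_of_two_ne_zero (hthin : IsThinGraded F L C) (h2 : (2 : F) ≠ 0)
    (hy : y ∈ C 1) (hy0 : y ≠ 0) (hD2 : ∀ u ∈ C 2, ⁅u, y⁆ = 0) (hC2 : finrank F (C 2) = 1)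
    (hC5 : finrank F (C 5) = 1) (hC6 : C 6 ≠ ⊥) (z : L) : ⁅⁅z, y⁆, y⁆ = 0 := by
  obtain ⟨x, hx, hxy⟩ := exists_span_pair_eq hthin.dim_one hy hy0
  obtain ⟨v, hv, hv0⟩ := (Submodule.ne_bot_iff (C 2)).mp fun h => by
    rw [h, finrank_bot] at hC2
    exact zero_ne_one hC2
  have hD3 : ∀ u ∈ C 3, ⁅u, y⁆ = 0 := fun u hu =>
    hthin.lie_eq_zero_of_mem_succ hxy.ge hv hv0 (hD2 v hv) (by
      rw [lie_lie_comm, hD2 v hv, zero_lie, zero_add,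
        lie_eq_zero_of_finrank_eq_one hC2 hv (hthin.bracket_mem 1 1 x hx y hy)]) hu
  have hv2 := hD2 _ (hthin.bracket_mem 1 1 x hx y hy)
  have hv3 := hD3 _ (hthin.bracket_mem 2 1 _ (hthin.bracket_mem 1 1 x hx y hy) x hx)
  obtain ⟨hv4, hv5⟩ := hthin.lie_eq_zero_of_finrank_five hxy.ge hx hy h2 hv2 hv3 hC5 hC6
  have hz : z ∈ ⨆ n, C n := hthin.internal.submodule_iSup_eq_top ▸ Submodule.mem_top
  refine Submodule.iSup_induction C (motive := fun z => ⁅⁅z, y⁆, y⁆ = 0) hz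
    (fun n u hu => (hthin.forall_lie_lie_eq_zero hxy.ge hx hy h2 hD2 hD3 hv4 hv5 n u hu).1)
    (by rw [zero_lie, zero_lie]) fun a b ha hb => ?_
  rw [add_lie, add_lie, ha, hb, add_zero]

end IsThinGraded

/-- Main theorem: if the second diamond of a thin Lie algebra is `L_k` with
`k > 5`, then `[L y y] = 0` for some nonzero `y ∈ L₁`. -/
theorem thin_sandwich {F L : Type*} [Field F] [LieRing L] [LieAlgebra F L]
    {C : ℕ → Submodule F L} (hthin : IsThinGraded F L C)
    {k : ℕ} (hk : 5 < k)
    (hone : ∀ i, 2 ≤ i → i < k → Module.finrank F (C i) = 1)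
    (hdiam : Module.finrank F (C k) = 2) :
    ∃ y ∈ C 1, y ≠ 0 ∧ ∀ z : L, ⁅⁅z, y⁆, y⁆ = 0 := by
  have hC6 : C 6 ≠ ⊥ := fun h => by
    have h6 : finrank F (C 6) = 0 := by rw [h, finrank_bot]
    rcases (show 6 < k ∨ 6 = k by omega) with hk6 | rfl
    · rw [hone 6 (by norm_num) hk6] at h6
      exact one_ne_zero h6
    · omega
  obtain ⟨y, hy, hy0, hD2⟩ :=
    hthin.exists_lie_eq_zero (hone 2 le_rfl (by omega)) (hone 3 (by norm_num) (by omega))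
  refine ⟨y, hy, hy0, ?_⟩
  by_cases h2 : (2 : F) = 0
  · exact lie_lie_eq_zero_of_two_eq_zero h2 hthin.generates
      fun a ha => hD2 _ (hthin.bracket_mem 1 1 a ha y hy)
  · exact hthin.lie_lie_eq_zero_of_two_ne_zero h2 hy hy0 hD2 (hone 2 le_rfl (by omega))
      (hone 5 (by norm_num) hk) hC6
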